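/- For every state σ, every question Q ⊆ U and every integer q ≥ 1, the q-th volume splits as w_q(σ) = w_{q−1}(σ_yes) + w_{q−1}(σ_no), where σ_yes and σ_no are the states resulting from a yes and a no answer to Q in state σ. -/
import Mathlib


open scoped Classical

noncomputable section

namespace UlamRenyi

/-- A state of the Ulam–Rényi game with 3 lies over a universe of size `u`:
a function `U → {0,1,2,3,4}`. -/
abbrev State (u : ℕ) := Fin u → Fin 5

variable {u : ℕ}

/-- The set of elements lying on level `i` of the state `σ`. -/
def levelSet (σ : State u) (i : ℕ) : Set (Fin u) := {y | (σ y : ℕ) = i}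

/-- The support of a state: the elements at level `≤ 3`. -/
def support (σ : State u) : Set (Fin u) := {y | (σ y : ℕ) ≤ 3}

/-- A state is final if its support has at most one element. -/
def IsFinal (σ : State u) : Prop := (support σ).Subsingleton

/-- `stCount σ i = |σ⁻¹(i)|`. -/
def stCount (σ : State u) (i : ℕ) : ℕ := (levelSet σ i).ncard

/-- The type of a state: `(t₀, t₁, t₂, t₃)` with `tᵢ = |σ⁻¹(i)|`. -/
def stType (σ : State u) : ℕ × ℕ × ℕ × ℕ :=
  (stCount σ 0, stCount σ 1, stCount σ 2, stCount σ 3)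

/-- The state resulting from the answer *yes* to question `Q` in state `σ`:
`σ_yes(y) = min (σ(y) + 1_{y ∉ Q}, 4)`. -/
def yesState (σ : State u) (Q : Set (Fin u)) : State u := fun y =>
  ⟨min ((σ y : ℕ) + (if y ∈ Q then 0 else 1)) 4,
    Nat.lt_succ_of_le (Nat.min_le_right _ _)⟩

/-- The state resulting from the answer *no* to question `Q` in state `σ`:
`σ_no(y) = min (σ(y) + 1_{y ∈ Q}, 4)`. -/
def noState (σ : State u) (Q : Set (Fin u)) : State u := fun y =>
  ⟨min ((σ y : ℕ) + (if y ∈ Q then 1 else 0)) 4,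
    Nat.lt_succ_of_le (Nat.min_le_right _ _)⟩

/-- The state resulting from answer `b` (`true` = yes, `false` = no). -/
def ansState (σ : State u) (Q : Set (Fin u)) : Bool → State u
  | true => yesState σ Q
  | false => noState σ Q

/-- An interval of the universe: the empty set, or `[a,b] = {x | a ≤ x ≤ b}`. -/
def IsInterval (I : Set (Fin u)) : Prop :=
  I = ∅ ∨ ∃ a b : Fin u, I = Set.Icc a b

/-- A `k`-interval question: a union of at most `k` intervals. -/
def IsKIntervalQuestion (k : ℕ) (Q : Set (Fin u)) : Prop :=
  ∃ I : Fin k → Set (Fin u), (∀ t, IsInterval (I t)) ∧ Q = ⋃ t, I t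

/-- The type of a question with respect to a state: `aᵢ = |Q ∩ σ⁻¹(i)|`. -/
def qType (σ : State u) (Q : Set (Fin u)) (i : ℕ) : ℕ :=
  (Q ∩ levelSet σ i).ncard

/-- A strategy: a labelling of the nodes of the complete binary tree
(identified with finite lists of answers, `true` = yes) by questions. -/
abbrev Strategy (u : ℕ) := List Bool → Set (Fin u)

/-- The state reached from `σ` by playing strategy `S` along the answer sequence `bs`. -/
def play : State u → Strategy u → List Bool → State u
  | σ, _, [] => σ
  | σ, S, b :: bs => play (ansState σ (S []) b) (fun l => S (b :: l)) bs

/-- `S` is a winning strategy of size `q` for state `σ`: along every root-to-leaf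
path of length `q` the resulting state is final. -/
def IsWinning (σ : State u) (S : Strategy u) (q : ℕ) : Prop :=
  ∀ bs : List Bool, bs.length = q → IsFinal (play σ S bs)

/-- All the questions asked by `S` in a game of `q` rounds are `k`-interval questions. -/
def UsesKIntervals (S : Strategy u) (q k : ℕ) : Prop :=
  ∀ bs : List Bool, bs.length < q → IsKIntervalQuestion k (S bs)

/-- `binSum q e = ∑_{ℓ=0}^{e} C(q,ℓ)`. -/
def binSum (q e : ℕ) : ℕ := ∑ ℓ ∈ Finset.range (e + 1), Nat.choose q ℓ

/-- The `q`-th volume of a state: `w_q(σ) = ∑_{j=0}^{3} |σ⁻¹(j)| ∑_{ℓ=0}^{3-j} C(q,ℓ)`. -/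
def vol (σ : State u) (q : ℕ) : ℕ :=
  ∑ j ∈ Finset.range 4, stCount σ j * binSum q (3 - j)

/-- The character of a state: `ch(σ) = min {q : w_q(σ) ≤ 2^q}`. -/
def ch (σ : State u) : ℕ := sInf {q | vol σ q ≤ 2 ^ q}

/-- `N_min(2^m, 3) = min {q : 2^{q-m} ≥ ∑_{i=0}^{3} C(q,i)}`. -/
def Nmin (m : ℕ) : ℕ := sInf {q | 2 ^ m * binSum q 3 ≤ 2 ^ q}

/-- The initial, constant-0, state. -/
def initState (u : ℕ) : State u := fun _ => 0

/-- Cyclic successor of an index. -/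
def cSucc {r : ℕ} (i : Fin r) : Fin r := ⟨(i.val + 1) % r, Nat.mod_lt _ i.pos⟩

/-- Cyclic predecessor of an index. -/
def cPred {r : ℕ} (i : Fin r) : Fin r := ⟨(i.val + (r - 1)) % r, Nat.mod_lt _ i.pos⟩

/-- A cyclic list of (possibly empty) arcs representing the state `σ`:
the arcs are pairwise disjoint sets of cyclically consecutive elements of the
support, appearing around the circle in the order of their indices (with respect
to some base point of the circle), each arc lying on one level of `σ`, together
covering the support, and the levels of consecutive arcs differ by exactly 1. -/
structure ArcDecomp (σ : State u) (r : ℕ) where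
  /-- the level of each arc -/
  lvl : Fin r → ℕ
  /-- the arcs (possibly empty) -/
  arc : Fin r → Set (Fin u)
  /-- base point used to linearize the cyclic order -/
  base : Fin u
  lvl_le : ∀ i, lvl i ≤ 3
  arc_lvl : ∀ i, arc i ⊆ levelSet σ (lvl i)
  cover : ∀ y ∈ support σ, ∃! i, y ∈ arc i
  step : ∀ i : Fin r, lvl (cSucc i) = lvl i + 1 ∨ lvl i = lvl (cSucc i) + 1
  ordered : ∀ i j : Fin r, i < j → ∀ x ∈ arc i, ∀ y ∈ arc j, x - base < y - base

/-- The number of arcs of the decomposition lying on level `ℓ`. -/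
def arcCountAt {σ : State u} {r : ℕ} (d : ArcDecomp σ r) (ℓ : ℕ) : ℕ :=
  (Finset.univ.filter fun i => d.lvl i = ℓ).card

/-- The decomposition has exactly `2i+1` arcs on level `i` for `i = 0,1,2`, and
exactly `3` arcs on level `3`. -/
def GoodCounts {σ : State u} (d : ArcDecomp σ 12) : Prop :=
  arcCountAt d 0 = 1 ∧ arcCountAt d 1 = 3 ∧ arcCountAt d 2 = 5 ∧ arcCountAt d 3 = 3

/-- A state is well-shaped if its shortest cyclic arc decomposition has exactly
`2i+1` arcs on level `i` for `i = 0,1,2` and exactly `3` arcs on level `3`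
(hence length 12). -/
def IsWellShaped (σ : State u) : Prop :=
  (∀ r : ℕ, Nonempty (ArcDecomp σ r) → 12 ≤ r) ∧
  ∃ d : ArcDecomp σ 12, GoodCounts d

/-- A state of type `(t₀,t₁,t₂,t₃)` is 0-typical if `t₀ = 0`, `t₂ ≥ t₁ - 1`
and `t₃ ≥ ch(σ)`. -/
def IsZeroTypical (σ : State u) : Prop :=
  stCount σ 0 = 0 ∧ stCount σ 1 ≤ stCount σ 2 + 1 ∧ ch σ ≤ stCount σ 3

/-- A state is 4-interval nice if it is well shaped and admits a winning strategy
of size `ch(σ)` all of whose questions are 4-interval questions. -/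
def FourIntervalNice (σ : State u) : Prop :=
  IsWellShaped σ ∧
  ∃ S : Strategy u, IsWinning σ S (ch σ) ∧ UsesKIntervals S (ch σ) 4

end UlamRenyi

namespace UlamRenyi

/-- Pointwise weight of a value. -/
def wt (a q : ℕ) : ℕ := if a ≤ 3 then binSum q (3 - a) else 0

lemma binSum_zero (q : ℕ) : binSum q 0 = 1 := by simp [binSum]

lemma binSum_succ_succ (q e : ℕ) :
    binSum (q + 1) (e + 1) = binSum q (e + 1) + binSum q e := by
  unfold binSum
  rw [Finset.sum_range_succ' (fun ℓ => Nat.choose (q + 1) ℓ)]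
  simp only [Nat.choose_succ_succ, Finset.sum_add_distrib, Nat.choose_zero_right]
  rw [Finset.sum_range_succ' (fun ℓ => Nat.choose q ℓ) (e + 1)]
  simp [Nat.choose_zero_right]
  ring

lemma wt_split (a q : ℕ) (hq : 1 ≤ q) :
    wt a q = wt a (q - 1) + wt (min (a + 1) 4) (q - 1) := by
  obtain ⟨q', rfl⟩ : ∃ q', q = q' + 1 := ⟨q - 1, (Nat.succ_pred_eq_of_pos hq).symm⟩
  simp only [Nat.add_sub_cancel]
  rcases Nat.lt_or_ge a 3 with ha | ha
  · have h1 : a ≤ 3 := le_of_lt ha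
    have h2 : min (a + 1) 4 ≤ 3 := by omega
    have h3 : min (a + 1) 4 = a + 1 := by omega
    have h4 : 3 - a = (2 - a) + 1 := by omega
    have h5 : 3 - (a + 1) = 2 - a := by omega
    simp only [wt, h1, h2, h3, if_true, h4, h5, binSum_succ_succ]
    rw [if_pos (show a + 1 ≤ 3 by omega)]
  · rcases Nat.lt_or_ge a 4 with ha4 | ha4
    · have h : a = 3 := by omega
      subst h
      simp [wt, binSum_zero]
    · have h1 : ¬ a ≤ 3 := by omega
      have h2 : ¬ min (a + 1) 4 ≤ 3 := by omega
      simp [wt, h1, h2]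

lemma stCount_eq {u : ℕ} (σ : State u) (j : ℕ) :
    stCount σ j = (Finset.univ.filter fun y => (σ y : ℕ) = j).card := by
  simp [stCount, levelSet, Set.ncard_eq_toFinset_card', Set.toFinset_setOf]

lemma vol_eq_sum_wt {u : ℕ} (σ : State u) (q : ℕ) :
    vol σ q = ∑ y : Fin u, wt (σ y) q := by
  have hfib : ∑ y : Fin u, wt (σ y) q
      = ∑ j ∈ Finset.range 5,
          ∑ y ∈ Finset.univ.filter (fun y => (σ y : ℕ) = j), wt (σ y) q := by
    rw [Finset.sum_fiberwise_of_maps_to]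
    intro y _
    exact Finset.mem_range.mpr (σ y).isLt
  rw [hfib]
  have h5 : ∑ j ∈ Finset.range 5,
          ∑ y ∈ Finset.univ.filter (fun y => (σ y : ℕ) = j), wt (σ y) q
      = ∑ j ∈ Finset.range 4,
          ∑ y ∈ Finset.univ.filter (fun y => (σ y : ℕ) = j), wt (σ y) q := by
    rw [Finset.sum_range_succ]
    have : ∑ y ∈ Finset.univ.filter (fun y => (σ y : ℕ) = 4), wt (σ y) q = 0 := by
      apply Finset.sum_eq_zero
      intro y hy
      simp only [Finset.mem_filter] at hy
      simp [wt, hy.2]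
    rw [this, add_zero]
  rw [h5]
  unfold vol
  apply Finset.sum_congr rfl
  intro j hj
  have hj4 : j ≤ 3 := Nat.lt_succ_iff.mp (Finset.mem_range.mp hj)
  rw [stCount_eq]
  rw [Finset.sum_congr rfl (fun y hy => by
    simp only [Finset.mem_filter] at hy
    show wt (σ y) q = binSum q (3 - j)
    simp [wt, hy.2, hj4])]
  simp [mul_comm]

/-- For every state `σ`, question `Q` and `q ≥ 1`, the volume
splits as `w_q(σ) = w_{q-1}(σ_yes) + w_{q-1}(σ_no)`. -/
theorem vol_split (m : ℕ) (hm : 1 ≤ m)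
    (σ : State (2 ^ m)) (Q : Set (Fin (2 ^ m))) (q : ℕ) (hq : 1 ≤ q) :
    vol σ q = vol (yesState σ Q) (q - 1) + vol (noState σ Q) (q - 1) := by
  rw [vol_eq_sum_wt, vol_eq_sum_wt, vol_eq_sum_wt, ← Finset.sum_add_distrib]
  apply Finset.sum_congr rfl
  intro y _
  have hle : (σ y : ℕ) ≤ 4 := Nat.lt_succ_iff.mp (σ y).isLt
  by_cases hy : y ∈ Q
  · have h1 : (yesState σ Q y : ℕ) = (σ y : ℕ) := by
      simp [yesState, hy, Nat.min_eq_left, hle]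
    have h2 : (noState σ Q y : ℕ) = min ((σ y : ℕ) + 1) 4 := by
      simp [noState, hy]
    rw [h1, h2]
    exact wt_split _ q hq
  · have h1 : (yesState σ Q y : ℕ) = min ((σ y : ℕ) + 1) 4 := by
      simp [yesState, hy]
    have h2 : (noState σ Q y : ℕ) = (σ y : ℕ) := by
      simp [noState, hy, Nat.min_eq_left, hle]
    rw [h1, h2, Nat.add_comm (wt _ _)]
    exact wt_split _ q hq

end UlamRenyi
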